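/- arXiv:2406.17631 — 4 statements merged into one kernel-verified Lean document; each statement's English description precedes it below -/
import Mathlib

section
/- A graph G admits a {K₂,C}-factor (a spanning subgraph each of whose components is an edge K₂ or a cycle) if and only if i(G−X) ≤ |X| for every vertex subset X ⊆ V(G). -/
/-!
A `{K₂, C}`-factor amounts to an injective map `σ` with `v ~ σ v` for every vertex `v`: rotate
each component of the factor one step (`K₂` being the 2-cycle); conversely the components of the
functional graph of the permutation `σ` are its cycles, of length at least 2 as `σ` has no fixed
point. Such a `σ` is a system of distinct representatives of the neighbourhoods, so by Hall's
theorem it exists iff `|A| ≤ |N(A)|` for all `A`. This is equivalent to `i(G - X) ≤ |X|`: `σ`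
maps the isolated vertices of `G - X` injectively into `X`, and conversely `T = A \ N(A)`
consists of isolated vertices of `G - N(T)`, where `N(T) ⊆ N(A) \ A`.
-/

open SimpleGraph

variable {α β : Type*}

/-- The graph obtained from `G` by deleting the vertices in `S` (an induced subgraph
on the complement of `S`). -/
def SimpleGraph.delVerts (G : SimpleGraph α) (S : Set α) : SimpleGraph ↥(Sᶜ) :=
  G.induce Sᶜ

/-- The number of isolated vertices of a graph. -/
noncomputable def isoCount (H : SimpleGraph α) : ℕ :=
  Nat.card {v : α // ∀ w, ¬ H.Adj v w}

/-- The number of connected components of a graph. -/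
noncomputable def compCount (H : SimpleGraph α) : ℕ :=
  Nat.card H.ConnectedComponent

/-- A graph is `m`-connected if it has more than `m` vertices and stays connected
after deleting any fewer than `m` vertices. -/
def IsMConnected (G : SimpleGraph α) (m : ℕ) : Prop :=
  m < Nat.card α ∧ ∀ S : Set α, S.ncard < m → (G.delVerts S).Connected

/-- `G` has a spanning subgraph each of whose components is `K₂` or a cycle of length ≥ 3. -/
def HasK2CycleFactor (G : SimpleGraph α) : Prop :=
  ∃ F : SimpleGraph α, F ≤ G ∧ ∀ c : F.ConnectedComponent,
    Nonempty ((F.induce c.supp) ≃g (⊤ : SimpleGraph (Fin 2))) ∨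
    ∃ m : ℕ, 3 ≤ m ∧ Nonempty ((F.induce c.supp) ≃g cycleGraph m)

/-- `G` has a spanning subgraph each of whose components is `K₂` or an odd cycle of length ≥ 5. -/
def HasK2OddCycleFactor (G : SimpleGraph α) : Prop :=
  ∃ F : SimpleGraph α, F ≤ G ∧ ∀ c : F.ConnectedComponent,
    Nonempty ((F.induce c.supp) ≃g (⊤ : SimpleGraph (Fin 2))) ∨
    ∃ m : ℕ, 5 ≤ m ∧ Odd m ∧ Nonempty ((F.induce c.supp) ≃g cycleGraph m)

/-- `B` is (the vertex set of) a block of `H`: a maximal set inducing a connected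
subgraph with no cut vertex. -/
def IsBlock (H : SimpleGraph α) (B : Set α) : Prop :=
  ((H.induce B).Connected ∧ ∀ v ∈ B, B = {v} ∨ (H.induce (B \ {v})).Connected) ∧
  ∀ C : Set α, B ⊆ C →
    ((H.induce C).Connected ∧ ∀ v ∈ C, C = {v} ∨ (H.induce (C \ {v})).Connected) → B = C

/-- A triangular cactus: a connected graph each of whose blocks is a triangle;
by convention the one-vertex graph `K₁` is also a triangular cactus. -/
def IsTriangularCactus (H : SimpleGraph α) : Prop :=
  H.Connected ∧ ((∃ v : α, ∀ w : α, w = v) ∨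
    ∀ B : Set α, IsBlock H B → Nonempty ((H.induce B) ≃g (⊤ : SimpleGraph (Fin 3))))

/-- The number of connected components of `H` that are triangular cacti. -/
noncomputable def ctcCount (H : SimpleGraph α) : ℕ :=
  Nat.card {c : H.ConnectedComponent // IsTriangularCactus (H.induce c.supp)}

/-- The join of two graphs: their disjoint union together with all edges between them. -/
def SimpleGraph.join (G₁ : SimpleGraph α) (G₂ : SimpleGraph β) : SimpleGraph (α ⊕ β) where
  Adj u v := match u, v with
    | Sum.inl a, Sum.inl b => G₁.Adj a b
    | Sum.inr a, Sum.inr b => G₂.Adj a b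
    | Sum.inl _, Sum.inr _ => True
    | Sum.inr _, Sum.inl _ => True
  symm := ⟨fun u v => match u, v with
    | Sum.inl _, Sum.inl _ => fun h => G₁.adj_symm h
    | Sum.inr _, Sum.inr _ => fun h => G₂.adj_symm h
    | Sum.inl _, Sum.inr _ => fun _ => trivial
    | Sum.inr _, Sum.inl _ => fun _ => trivial⟩
  loopless := ⟨fun u => by cases u <;> simp⟩

/-- `G` is a `({K₂, C}, n)`-factor critical avoidable graph. -/
def K2CycleFactorCriticalAvoidable (G : SimpleGraph α) (n : ℕ) : Prop :=
  ∀ W : Set α, W.ncard = n → ∀ u v : α, u ∉ W → v ∉ W → G.Adj u v →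
    HasK2CycleFactor ((G.deleteEdges {s(u, v)}).delVerts W)

/-- `G` is a `({K₂, C_{2i+1} | i ≥ 2}, n)`-factor critical avoidable graph. -/
def K2OddCycleFactorCriticalAvoidable (G : SimpleGraph α) (n : ℕ) : Prop :=
  ∀ W : Set α, W.ncard = n → ∀ u v : α, u ∉ W → v ∉ W → G.Adj u v →
    HasK2OddCycleFactor ((G.deleteEdges {s(u, v)}).delVerts W)

open Function

section Cycles

lemma cycleGraph_adj_iff_add_one {n : ℕ} {i j : Fin (n + 2)} :
    (cycleGraph (n + 2)).Adj i j ↔ i + 1 = j ∨ j + 1 = i := by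
  rw [cycleGraph_adj, sub_eq_iff_eq_add, sub_eq_iff_eq_add, add_comm j, add_comm i]
  exact or_comm.trans (or_congr eq_comm eq_comm)

lemma cycleGraph_adj_add_one {n : ℕ} (i : Fin (n + 2)) : (cycleGraph (n + 2)).Adj i (i + 1) :=
  cycleGraph_adj_iff_add_one.mpr (Or.inl rfl)

lemma nonempty_iso_top_or_cycleGraph_iff {W : Type*} (H : SimpleGraph W) :
    (Nonempty (H ≃g (⊤ : SimpleGraph (Fin 2))) ∨
        ∃ m : ℕ, 3 ≤ m ∧ Nonempty (H ≃g cycleGraph m)) ↔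
      ∃ n : ℕ, Nonempty (H ≃g cycleGraph (n + 2)) := by
  rw [← cycleGraph_two_eq_top]
  constructor
  · rintro (h | ⟨m, hm, h⟩)
    · exact ⟨0, h⟩
    · obtain ⟨n, rfl⟩ : ∃ n, m = n + 3 := ⟨m - 3, by omega⟩
      exact ⟨n + 1, h⟩
  · rintro ⟨_ | n, h⟩
    · exact Or.inl h
    · exact Or.inr ⟨n + 3, by omega, h⟩

lemma hasK2CycleFactor_iff {V : Type*} (G : SimpleGraph V) :
    HasK2CycleFactor G ↔ ∃ F ≤ G, ∀ c : F.ConnectedComponent,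
      ∃ n : ℕ, Nonempty (F.induce c.supp ≃g cycleGraph (n + 2)) := by
  simp only [HasK2CycleFactor, nonempty_iso_top_or_cycleGraph_iff]

end Cycles

section InjectiveAdj

variable {V W : Type*}

lemma SimpleGraph.Iso.exists_injective_adj {H : SimpleGraph V} {K : SimpleGraph W} (e : H ≃g K)
    (hK : ∃ τ : W → W, Injective τ ∧ ∀ x, K.Adj x (τ x)) :
    ∃ τ : V → V, Injective τ ∧ ∀ x, H.Adj x (τ x) := by
  obtain ⟨τ, hτ, hadj⟩ := hK
  refine ⟨e.symm ∘ τ ∘ e, e.symm.injective.comp (hτ.comp e.injective), fun x => ?_⟩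
  simpa using e.symm.map_adj_iff.mpr (hadj (e x))

lemma exists_injective_adj_of_forall_connectedComponent {F : SimpleGraph V}
    (h : ∀ c : F.ConnectedComponent,
      ∃ τ : c.supp → c.supp, Injective τ ∧ ∀ x, (F.induce c.supp).Adj x (τ x)) :
    ∃ σ : V → V, Injective σ ∧ ∀ v, F.Adj v (σ v) := by
  choose τ hτ hadj using h
  let e := Equiv.sigmaFiberEquiv F.connectedComponentMk
  refine ⟨e ∘ Sigma.map id τ ∘ e.symm,
    e.injective.comp ((injective_id.sigma_map hτ).comp e.symm.injective), fun v => ?_⟩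
  exact hadj _ ⟨v, rfl⟩

end InjectiveAdj

section FunctionalGraph

variable {V : Type*}

def functionalGraph (σ : V → V) : SimpleGraph V :=
  fromRel fun x y => σ x = y

lemma functionalGraph_adj {σ : V → V} {x y : V} :
    (functionalGraph σ).Adj x y ↔ x ≠ y ∧ (σ x = y ∨ σ y = x) :=
  fromRel_adj _ x y

lemma functionalGraph_le {G : SimpleGraph V} {σ : V → V} (h : ∀ v, G.Adj v (σ v)) :
    functionalGraph σ ≤ G := by
  rintro x y ⟨-, rfl | rfl⟩
  exacts [h x, (h y).symm]

lemma functionalGraph_reachable_apply (σ : V → V) (x : V) :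
    (functionalGraph σ).Reachable x (σ x) := by
  by_cases h : x = σ x
  · rw [← h]
  · exact (functionalGraph_adj.mpr ⟨h, Or.inl rfl⟩).reachable

lemma functionalGraph_reachable_iff_sameCycle [Finite V] {σ : Equiv.Perm V} {x y : V} :
    (functionalGraph σ).Reachable x y ↔ σ.SameCycle x y := by
  constructor
  · rintro ⟨p⟩
    induction p with
    | nil => rfl
    | cons h _ ih =>
      refine Equiv.Perm.SameCycle.trans ?_ ih
      obtain ⟨-, rfl | rfl⟩ := functionalGraph_adj.mp h
      exacts [Equiv.Perm.sameCycle_apply_right.mpr (.refl _ _),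
        Equiv.Perm.sameCycle_apply_left.mpr (.refl _ _)]
  · intro h
    obtain ⟨n, rfl⟩ := h.exists_nat_pow_eq
    clear h
    induction n with
    | zero => rfl
    | succ n ih =>
      rw [pow_succ', Equiv.Perm.mul_apply]
      exact ih.trans (functionalGraph_reachable_apply σ _)

end FunctionalGraph

section CycleComponents

variable {V : Type*}

def functionalGraph_induce_iso_cycleGraph {σ : V → V} {S : Set V} {n : ℕ}
    (ψ : Fin (n + 2) ≃ S) (hψ : ∀ i, σ (ψ i) = ψ (i + 1)) :
    (functionalGraph σ).induce S ≃g cycleGraph (n + 2) :=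
  RelIso.symm ⟨ψ, fun {i j} => by
    have hne : i + 1 = j ∨ j + 1 = i → i ≠ j := by
      rintro (rfl | rfl) <;> simp
    simp only [comap_adj, Function.Embedding.subtype_apply,
      functionalGraph_adj, hψ, ne_eq, Subtype.val_injective.eq_iff, ψ.injective.eq_iff,
      cycleGraph_adj_iff_add_one]
    exact and_iff_right_of_imp hne⟩

lemma two_le_minimalPeriod [Finite V] {σ : V → V} (hσ : Injective σ) {x : V}
    (hx : σ x ≠ x) :
    2 ≤ minimalPeriod σ x := by
  have hpos := minimalPeriod_pos_of_mem_periodicPts (hσ.mem_periodicPts x)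
  have hne_one : minimalPeriod σ x ≠ 1 := mt minimalPeriod_eq_one_iff_isFixedPt.mp hx
  omega

lemma functionalGraph_induce_supp_iso_cycleGraph [Finite V] {σ : Equiv.Perm V}
    (hσ : ∀ v, σ v ≠ v) (c : (functionalGraph σ).ConnectedComponent) :
    ∃ n : ℕ, Nonempty ((functionalGraph σ).induce c.supp ≃g cycleGraph (n + 2)) := by
  induction c using ConnectedComponent.ind with | h u => ?_
  obtain ⟨n, hn⟩ : ∃ n, minimalPeriod σ u = n + 2 :=
    ⟨_, (Nat.sub_add_cancel (two_le_minimalPeriod σ.injective (hσ u))).symm⟩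
  have iterate_mod (m : ℕ) : σ^[m % (n + 2)] u = σ^[m] u := by
    rw [← hn]; exact iterate_mod_minimalPeriod_eq
  have mem_supp_iff (v : V) :
      v ∈ ((functionalGraph σ).connectedComponentMk u).supp ↔ σ.SameCycle u v := by
    rw [ConnectedComponent.mem_supp_iff, ConnectedComponent.eq,
      functionalGraph_reachable_iff_sameCycle, Equiv.Perm.sameCycle_comm]
  let ψ (i : Fin (n + 2)) : ((functionalGraph σ).connectedComponentMk u).supp :=
    ⟨(σ ^ (i : ℕ)) u, (mem_supp_iff _).mpr (Equiv.Perm.sameCycle_pow_right.mpr (.refl _ _))⟩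
  have hψ : Bijective ψ := by
    have lt_period (i : Fin (n + 2)) : (i : ℕ) ∈ Set.Iio (minimalPeriod σ u) := by
      rw [Set.mem_Iio, hn]; exact i.2
    refine ⟨fun i j h => Fin.ext (iterate_injOn_Iio_minimalPeriod (lt_period i) (lt_period j)
      (congrArg Subtype.val h)), fun ⟨v, hv⟩ => ?_⟩
    obtain ⟨m, rfl⟩ := ((mem_supp_iff v).mp hv).exists_nat_pow_eq
    exact ⟨⟨m % (n + 2), Nat.mod_lt _ (by omega)⟩, Subtype.ext (iterate_mod m)⟩
  refine ⟨n, ⟨functionalGraph_induce_iso_cycleGraph (Equiv.ofBijective ψ hψ) fun i => ?_⟩⟩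
  change σ (σ^[i] u) = σ^[(i + 1 : Fin (n + 2))] u
  rw [Fin.val_add, Fin.val_one, iterate_mod, iterate_succ_apply']

end CycleComponents

section IsolatedVertices

open Finset

variable {V : Type*} (G : SimpleGraph V)

lemma isoCount_delVerts_le_ncard [Finite V] {σ : V → V} (hσ : Injective σ)
    (hadj : ∀ v, G.Adj v (σ v)) (X : Set V) : isoCount (G.delVerts X) ≤ X.ncard := by
  let φ (v : {v : ↥Xᶜ // ∀ w, ¬ (G.delVerts X).Adj v w}) : X :=
    ⟨σ v, by_contra fun h => v.2 ⟨σ v, h⟩ (hadj v)⟩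
  have hφ : Injective φ := fun v w h =>
    Subtype.ext (Subtype.ext (hσ (congrArg Subtype.val h)))
  exact (Nat.card_le_card_of_injective φ hφ).trans_eq (Nat.card_coe_set_eq X)

lemma ncard_le_isoCount_delVerts [Finite V] {T X : Set V}
    (hT : ∀ t ∈ T, t ∉ X ∧ ∀ w, G.Adj t w → w ∈ X) :
    T.ncard ≤ isoCount (G.delVerts X) := by
  let φ (t : T) : {v : ↥Xᶜ // ∀ w, ¬ (G.delVerts X).Adj v w} :=
    ⟨⟨t, (hT t t.2).1⟩, fun w hw => w.2 ((hT t t.2).2 w hw)⟩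
  have hφ : Injective φ := fun t s h => Subtype.ext (congrArg (fun v => (v.1 : V)) h)
  exact (Nat.card_coe_set_eq T).symm.trans_le (Nat.card_le_card_of_injective φ hφ)

lemma card_le_card_biUnion_neighborFinset [Fintype V] [DecidableEq V] [DecidableRel G.Adj]
    (h : ∀ X : Set V, isoCount (G.delVerts X) ≤ X.ncard) (A : Finset V) :
    #A ≤ #(A.biUnion fun v => G.neighborFinset v) := by
  set N := A.biUnion fun v => G.neighborFinset v
  set T := A \ N
  set X := T.biUnion fun v => G.neighborFinset v
  have hX : X ⊆ N \ A := by
    intro w hw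
    simp only [X, T, N, mem_biUnion, mem_sdiff, mem_neighborFinset] at hw ⊢
    obtain ⟨t, ⟨htA, htN⟩, htw⟩ := hw
    exact ⟨⟨t, htA, htw⟩, fun hwA => htN ⟨w, hwA, htw.symm⟩⟩
  have hT : #T ≤ #X := by
    rw [← Set.ncard_coe_finset T, ← Set.ncard_coe_finset X]
    refine (ncard_le_isoCount_delVerts G fun t ht => ⟨fun htX => ?_, fun w htw => ?_⟩).trans
      (h _)
    · simp only [X, T, N, coe_biUnion, Set.mem_iUnion, mem_coe, mem_sdiff, mem_biUnion,
        mem_neighborFinset] at htX ht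
      obtain ⟨s, ⟨hsA, -⟩, hst⟩ := htX
      exact ht.2 ⟨s, hsA, hst⟩
    · exact mem_biUnion.mpr ⟨t, ht, (mem_neighborFinset _ _ _).mpr htw⟩
  calc #A = #(A \ N) + #(A ∩ N) := (card_sdiff_add_card_inter A N).symm
    _ ≤ #(N \ A) + #(N ∩ A) := by
      rw [inter_comm]
      exact Nat.add_le_add_right (hT.trans (card_le_card hX)) _
    _ = #N := card_sdiff_add_card_inter N A

end IsolatedVertices

section Main

variable {V : Type*} [Finite V] (G : SimpleGraph V)

theorem exists_injective_adj_iff_isoCount_le :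
    (∃ σ : V → V, Injective σ ∧ ∀ v, G.Adj v (σ v)) ↔
      ∀ X : Set V, isoCount (G.delVerts X) ≤ X.ncard := by
  refine ⟨fun ⟨σ, hσ, hadj⟩ => isoCount_delVerts_le_ncard G hσ hadj, fun h => ?_⟩
  classical
  have := Fintype.ofFinite V
  obtain ⟨σ, hσ, hmem⟩ := (Finset.all_card_le_biUnion_card_iff_exists_injective _).mp
    (card_le_card_biUnion_neighborFinset G h)
  exact ⟨σ, hσ, fun v => (mem_neighborFinset _ _ _).mp (hmem v)⟩

theorem hasK2CycleFactor_iff_exists_injective_adj :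
    HasK2CycleFactor G ↔ ∃ σ : V → V, Injective σ ∧ ∀ v, G.Adj v (σ v) := by
  rw [hasK2CycleFactor_iff]
  constructor
  · rintro ⟨F, hFG, hF⟩
    obtain ⟨σ, hσ, hadj⟩ := exists_injective_adj_of_forall_connectedComponent fun c =>
      let ⟨_, ⟨e⟩⟩ := hF c
      e.exists_injective_adj ⟨(· + 1), add_left_injective 1, cycleGraph_adj_add_one⟩
    exact ⟨σ, hσ, fun v => hFG (hadj v)⟩
  · rintro ⟨σ, hσ, hadj⟩
    let π := Equiv.ofBijective σ hσ.bijective_of_finite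
    exact ⟨functionalGraph π, functionalGraph_le hadj,
      functionalGraph_induce_supp_iso_cycleGraph (σ := π) fun v => (hadj v).ne'⟩

end Main

/-- A graph `G` admits a `{K₂, C}`-factor iff `i(G−X) ≤ |X|` for
every vertex subset `X`. -/
theorem statement3 {V : Type*} [Fintype V] (G : SimpleGraph V) :
    HasK2CycleFactor G ↔ ∀ X : Set V, isoCount (G.delVerts X) ≤ X.ncard :=
  (hasK2CycleFactor_iff_exists_injective_adj G).trans (exists_injective_adj_iff_isoCount_le G)
end

section
/- Let n and k be nonnegative integers with n ≥ k+1, and let G = K_{n+k+2} + ((k+1)K₁ ∪ K₂) be the join of the complete graph on n+k+2 vertices with the disjoint union of k+1 isolated vertices and a single edge K₂. Then G is (n+k+2)-connected, its isolated toughness satisfies I(G) = (n+k+3)/(k+2) > (n+k+4)/(k+3), and G is not a ({K₂,C},n)-factor critical avoidable graph. -/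
open SimpleGraph

variable {α β : Type*}

/-- The disjoint union of `m` triangles `K₃`. -/
def trianglesGraph (m : ℕ) : SimpleGraph (Fin m × Fin 3) where
  Adj p q := p.1 = q.1 ∧ p.2 ≠ q.2
  symm := ⟨fun _ _ h => ⟨h.1.symm, fun hh => h.2 hh.symm⟩⟩
  loopless := ⟨fun _ h => h.2 rfl⟩

/-- The graph `K_{n+k+3} + ((k+2)K₁ ∪ K₂)`. -/
def exampleGraph1 (n k : ℕ) :
    SimpleGraph (Fin (n + k + 3) ⊕ (Fin (k + 2) ⊕ Fin 2)) :=
  (⊤ : SimpleGraph (Fin (n + k + 3))).join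
    ((⊥ : SimpleGraph (Fin (k + 2))) ⊕g (⊤ : SimpleGraph (Fin 2)))

/-- The graph `K_{n+k+3} + ((k+2)K₃ ∪ K₂)`. -/
def exampleGraph2 (n k : ℕ) :
    SimpleGraph (Fin (n + k + 3) ⊕ ((Fin (k + 2) × Fin 3) ⊕ Fin 2)) :=
  (⊤ : SimpleGraph (Fin (n + k + 3))).join
    (trianglesGraph (k + 2) ⊕g (⊤ : SimpleGraph (Fin 2)))

/-- The graph `K_{n+k+2} + ((k+1)K₁ ∪ K₂)`. -/
def exampleGraph3 (n k : ℕ) :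
    SimpleGraph (Fin (n + k + 2) ⊕ (Fin (k + 1) ⊕ Fin 2)) :=
  (⊤ : SimpleGraph (Fin (n + k + 2))).join
    ((⊥ : SimpleGraph (Fin (k + 1))) ⊕g (⊤ : SimpleGraph (Fin 2)))

/-!
A hub vertex of `K_{n+k+2}` is adjacent to every other vertex. Hence deleting fewer than `n + k + 2`
vertices leaves a dominating vertex, and a set `S` leaving two isolated vertices contains all hubs,
so the isolated toughness is read off from what `S` removes of `(k+1)K₁ ∪ K₂`.

A `{K₂, C}`-factor yields a permutation `σ` with `x ~ σ x` for every `x`, so an independent set is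
never larger than its neighbourhood. After deleting `n` hubs and the edge of `K₂`, the `k + 3`
non-hub vertices are independent and their neighbours are the `k + 2` surviving hubs.
-/

namespace SimpleGraph

variable {V W : Type*}

section Factor

variable {G : SimpleGraph V}

lemma Iso.exists_perm_adj {H : SimpleGraph W} (φ : G ≃g H) {τ : Equiv.Perm W}
    (hτ : ∀ y, H.Adj y (τ y)) : ∃ σ : Equiv.Perm V, ∀ x, G.Adj x (σ x) :=
  ⟨φ.toEquiv.trans (τ.trans φ.symm.toEquiv),
    fun x => by simpa using φ.symm.map_adj_iff.mpr (hτ (φ x))⟩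

lemma top_adj_add_one (y : Fin 2) : (⊤ : SimpleGraph (Fin 2)).Adj y (Equiv.addRight 1 y) := by
  revert y; decide

lemma cycleGraph_adj_add_one {m : ℕ} (y : Fin (m + 2)) :
    (cycleGraph (m + 2)).Adj y (Equiv.addRight 1 y) :=
  cycleGraph_adj.mpr (Or.inr (by simp))

lemma HasK2CycleFactor.exists_perm_adj (hG : HasK2CycleFactor G) :
    ∃ σ : Equiv.Perm V, ∀ x, G.Adj x (σ x) := by
  obtain ⟨F, hFG, hF⟩ := hG
  have hcomp (c : F.ConnectedComponent) :
      ∃ σ : Equiv.Perm c.supp, ∀ x, (F.induce c.supp).Adj x (σ x) := by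
    rcases hF c with ⟨⟨φ⟩⟩ | ⟨m, hm, ⟨φ⟩⟩
    · exact φ.exists_perm_adj top_adj_add_one
    · obtain ⟨m, rfl⟩ : ∃ p, m = p + 2 := ⟨m - 2, by omega⟩
      exact φ.exists_perm_adj cycleGraph_adj_add_one
  choose σ hσ using hcomp
  exact ⟨Equiv.ofFiberEquiv σ, fun x => hFG (hσ (F.connectedComponentMk x) ⟨x, rfl⟩)⟩

lemma HasK2CycleFactor.card_le {ι κ : Type*} [Finite κ] (hG : HasK2CycleFactor G)
    {p : ι → V} (hp : p.Injective) (q : κ → V) (hpq : ∀ i v, G.Adj (p i) v → v ∈ Set.range q) :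
    Nat.card ι ≤ Nat.card κ := by
  obtain ⟨σ, hσ⟩ := hG.exists_perm_adj
  choose j hj using fun i => hpq i _ (hσ (p i))
  refine Nat.card_le_card_of_injective j fun i i' h => hp (σ.injective ?_)
  rw [← hj, ← hj, h]

end Factor

lemma isoCount_bot : isoCount (⊥ : SimpleGraph V) = Nat.card V :=
  Nat.card_congr (Equiv.subtypeUnivEquiv fun _ _ => id)

@[simp] lemma delVerts_adj {G : SimpleGraph V} {S : Set V} {x y : ↥Sᶜ} :
    (G.delVerts S).Adj x y ↔ G.Adj x y :=
  Iff.rfl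

lemma IsUniversal.delVerts {G : SimpleGraph V} {v : V} (hv : G.IsUniversal v)
    {S : Set V} (hvS : v ∉ S) : (G.delVerts S).IsUniversal ⟨v, hvS⟩ :=
  fun _ hw => hv (Subtype.coe_ne_coe.mpr hw)

section Isolated

variable [Finite V] {H : SimpleGraph V}

lemma isoCount_le_card (H : SimpleGraph V) : isoCount H ≤ Nat.card V :=
  Finite.card_subtype_le _

lemma isoCount_add_two_le_card {u v : V} (huv : H.Adj u v) : isoCount H + 2 ≤ Nat.card V := by
  have hsub : {x | ∀ w, ¬ H.Adj x w} ⊆ ({u, v} : Set V)ᶜ := by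
    rintro x hx (rfl | rfl)
    exacts [hx v huv, hx u huv.symm]
  have hle := Set.ncard_le_ncard hsub
  rw [Set.ncard_compl, Set.ncard_pair huv.ne] at hle
  have := Set.ncard_le_ncard (Set.subset_univ ({u, v} : Set V))
  rw [Set.ncard_pair huv.ne, Set.ncard_univ] at this
  exact (Nat.le_sub_iff_add_le this).mp hle

lemma IsUniversal.isoCount_le_one {v : V} (hv : H.IsUniversal v) : isoCount H ≤ 1 := by
  refine Finite.card_le_one_iff_subsingleton.mpr ⟨fun x y => Subtype.ext ?_⟩
  have eq_v (z : {x // ∀ w, ¬ H.Adj x w}) : z.1 = v := by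
    by_contra hz
    exact z.2 v (hv (Ne.symm hz)).symm
  rw [eq_v x, eq_v y]

end Isolated

section Join

variable (G₁ : SimpleGraph α) (G₂ : SimpleGraph β)

@[simp] lemma join_adj_inl_inl {a b : α} : (G₁.join G₂).Adj (.inl a) (.inl b) ↔ G₁.Adj a b :=
  Iff.rfl

@[simp] lemma join_adj_inr_inr {a b : β} : (G₁.join G₂).Adj (.inr a) (.inr b) ↔ G₂.Adj a b :=
  Iff.rfl

@[simp] lemma join_adj_inl_inr {a : α} {b : β} : (G₁.join G₂).Adj (.inl a) (.inr b) :=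
  trivial

@[simp] lemma join_adj_inr_inl {a : β} {b : α} : (G₁.join G₂).Adj (.inr a) (.inl b) :=
  trivial

lemma isUniversal_top_join_inl (a : α) : ((⊤ : SimpleGraph α).join G₂).IsUniversal (.inl a) := by
  rintro (b | b) h
  · exact (join_adj_inl_inl _ _).mpr fun hab => h (congrArg _ hab)
  · trivial

lemma card_le_ncard_of_range_inl_subset {S : Set (α ⊕ β)} [Finite (α ⊕ β)]
    (hS : Set.range Sum.inl ⊆ S) : Nat.card α ≤ S.ncard := by
  rw [← Set.ncard_range_of_injective Sum.inl_injective]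
  exact Set.ncard_le_ncard hS

lemma isMConnected_top_join [Finite α] [Finite β] [Nonempty β] :
    IsMConnected ((⊤ : SimpleGraph α).join G₂) (Nat.card α) := by
  refine ⟨by simp [Nat.card_sum, Nat.card_pos], fun S hS => ?_⟩
  obtain ⟨_, ⟨a, rfl⟩, ha⟩ := Set.not_subset.mp
    fun h => hS.not_ge (card_le_ncard_of_range_inl_subset h)
  exact Connected.of_isUniversal ((isUniversal_top_join_inl G₂ a).delVerts ha)

lemma range_inl_subset_of_two_le_isoCount [Finite α] [Finite β] {S : Set (α ⊕ β)}
    (hS : 2 ≤ isoCount (((⊤ : SimpleGraph α).join G₂).delVerts S)) : Set.range Sum.inl ⊆ S := by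
  rintro _ ⟨a, rfl⟩
  by_contra ha
  have := ((isUniversal_top_join_inl G₂ a).delVerts ha).isoCount_le_one
  omega

end Join

end SimpleGraph

open SimpleGraph

section ExampleGraph3

variable {n k : ℕ}

local notation "V₃" => Fin (n + k + 2) ⊕ (Fin (k + 1) ⊕ Fin 2)

lemma card_V₃ : Nat.card V₃ = n + 2 * k + 5 := by
  simp only [Nat.card_eq_fintype_card, Fintype.card_sum, Fintype.card_fin]
  omega

lemma exampleGraph3_adj_inr_inr {x y : Fin (k + 1) ⊕ Fin 2} :
    (exampleGraph3 n k).Adj (.inr x) (.inr y) ↔ ∃ b b', x = .inr b ∧ y = .inr b' ∧ b ≠ b' := by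
  rcases x with x | x <;> rcases y with y | y <;> simp [exampleGraph3]

lemma exampleGraph3_deleteEdges_not_adj_inr_inr (x y : Fin (k + 1) ⊕ Fin 2) :
    ¬ ((exampleGraph3 n k).deleteEdges {s(.inr (.inr 0), .inr (.inr 1))}).Adj
      (.inr x) (.inr y) := by
  rw [deleteEdges_adj, exampleGraph3_adj_inr_inr]
  rintro ⟨⟨b, b', rfl, rfl, hb⟩, hne⟩
  fin_cases b <;> fin_cases b' <;> simp_all [Sym2.eq_swap]

lemma exampleGraph3_isoCount_mul_le {S : Set V₃}
    (hS : 2 ≤ isoCount ((exampleGraph3 n k).delVerts S)) :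
    (n + k + 3) * isoCount ((exampleGraph3 n k).delVerts S) ≤ (k + 2) * S.ncard := by
  have hinl : Set.range Sum.inl ⊆ S := range_inl_subset_of_two_le_isoCount _ hS
  have hhubs : n + k + 2 ≤ S.ncard := by
    simpa using card_le_ncard_of_range_inl_subset hinl
  have htotal : S.ncard + Sᶜ.ncard = n + 2 * k + 5 := card_V₃ ▸ Set.ncard_add_ncard_compl S
  have hiso : isoCount ((exampleGraph3 n k).delVerts S) ≤ Sᶜ.ncard :=
    (isoCount_le_card _).trans_eq (Nat.card_coe_set_eq _)
  -- Either `S` also meets the `K₂`, or the `K₂` survives as an edge with no isolated vertex.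
  have hcases : n + k + 3 ≤ S.ncard ∨
      isoCount ((exampleGraph3 n k).delVerts S) + 2 ≤ Sᶜ.ncard := by
    by_cases hK₂ : ∃ b, .inr (.inr b) ∈ S
    · obtain ⟨b, hb⟩ := hK₂
      have := Set.ncard_le_ncard (Set.insert_subset hb hinl)
      rw [Set.ncard_insert_of_notMem (by simp), Set.ncard_range_of_injective Sum.inl_injective,
        Nat.card_fin] at this
      exact .inl this
    · rw [not_exists] at hK₂
      have hadj : ((exampleGraph3 n k).delVerts S).Adj ⟨_, hK₂ 0⟩ ⟨_, hK₂ 1⟩ := by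
        simp [exampleGraph3]
      exact .inr ((Nat.card_coe_set_eq Sᶜ) ▸ isoCount_add_two_le_card hadj)
  rcases hcases with h | h <;> nlinarith

lemma exampleGraph3_delVerts_insert_range_inl_eq_bot :
    (exampleGraph3 n k).delVerts (insert (.inr (.inr 0)) (Set.range Sum.inl)) = ⊥ := by
  rw [eq_bot_iff_forall_not_adj]
  rintro ⟨x | x, hx⟩ ⟨y | y, hy⟩ hadj
  · simp at hx
  · simp at hx
  · simp at hy
  obtain ⟨b, b', rfl, rfl, hbb'⟩ := exampleGraph3_adj_inr_inr.mp (delVerts_adj.mp hadj)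
  simp only [Set.mem_compl_iff, Set.mem_insert_iff, Sum.inr.injEq, Set.mem_range, reduceCtorEq,
    exists_false, or_false] at hx hy
  omega

lemma exists_exampleGraph3_isoCount_eq :
    ∃ S : Set V₃, 2 ≤ isoCount ((exampleGraph3 n k).delVerts S) ∧
      (S.ncard : ℝ) / (isoCount ((exampleGraph3 n k).delVerts S) : ℝ) =
        ((n : ℝ) + k + 3) / ((k : ℝ) + 2) := by
  set S : Set V₃ := insert (.inr (.inr 0)) (Set.range Sum.inl)
  have hS : S.ncard = n + k + 3 := by
    rw [Set.ncard_insert_of_notMem (by simp), Set.ncard_range_of_injective Sum.inl_injective]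
    simp
  have hiso : isoCount ((exampleGraph3 n k).delVerts S) = k + 2 := by
    rw [exampleGraph3_delVerts_insert_range_inl_eq_bot, isoCount_bot, Nat.card_coe_set_eq]
    have := card_V₃ (n := n) (k := k) ▸ Set.ncard_add_ncard_compl S
    omega
  refine ⟨S, by omega, ?_⟩
  rw [hS, hiso]
  push_cast
  ring

lemma not_exampleGraph3_k2CycleFactorCriticalAvoidable :
    ¬ K2CycleFactorCriticalAvoidable (exampleGraph3 n k) n := by
  intro h
  set W : Set V₃ := Set.range (Sum.inl ∘ Fin.castAdd (k + 2))
  have hW : W.ncard = n :=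
    (Set.ncard_range_of_injective (Sum.inl_injective.comp (Fin.castAdd_injective _ _))).trans
      (Nat.card_fin n)
  have inr_notMem (x : Fin (k + 1) ⊕ Fin 2) : .inr x ∉ W := by simp [W]
  have natAdd_notMem (j : Fin (k + 2)) : .inl (Fin.natAdd n j) ∉ W := by
    simp [W, Fin.ext_iff]
    omega
  have hfactor := h W hW (.inr (.inr 0)) (.inr (.inr 1)) (inr_notMem _) (inr_notMem _)
    (by simp [exampleGraph3])
  have := hfactor.card_le (p := fun x => ⟨.inr x, inr_notMem x⟩)
    (fun x y hxy => Sum.inr_injective (congrArg Subtype.val hxy))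
    (fun j : Fin (k + 2) => (⟨.inl (Fin.natAdd n j), natAdd_notMem j⟩ : ↥Wᶜ)) ?_
  · simp at this
  rintro x ⟨y | y, hy⟩ hadj
  · induction y using Fin.addCases (m := n) (n := k + 2) with
    | left i => exact absurd ⟨i, rfl⟩ hy
    | right j => exact ⟨j, rfl⟩
  · exact absurd (delVerts_adj.mp hadj) (exampleGraph3_deleteEdges_not_adj_inr_inr x y)

end ExampleGraph3

theorem statement13_general (n k : ℕ) :
    IsMConnected (exampleGraph3 n k) (n + k + 2) ∧
    (∀ S : Set (Fin (n + k + 2) ⊕ (Fin (k + 1) ⊕ Fin 2)),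
      2 ≤ isoCount ((exampleGraph3 n k).delVerts S) →
      ((n : ℝ) + k + 3) / ((k : ℝ) + 2) ≤
        (S.ncard : ℝ) / (isoCount ((exampleGraph3 n k).delVerts S) : ℝ)) ∧
    (∃ S : Set (Fin (n + k + 2) ⊕ (Fin (k + 1) ⊕ Fin 2)),
      2 ≤ isoCount ((exampleGraph3 n k).delVerts S) ∧
      (S.ncard : ℝ) / (isoCount ((exampleGraph3 n k).delVerts S) : ℝ) =
        ((n : ℝ) + k + 3) / ((k : ℝ) + 2)) ∧
    ((n : ℝ) + k + 4) / ((k : ℝ) + 3) < ((n : ℝ) + k + 3) / ((k : ℝ) + 2) ∧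
    ¬ K2CycleFactorCriticalAvoidable (exampleGraph3 n k) n := by
  refine ⟨?_, fun S hS => ?_, exists_exampleGraph3_isoCount_eq, ?_,
    not_exampleGraph3_k2CycleFactorCriticalAvoidable⟩
  · have := isMConnected_top_join (α := Fin (n + k + 2))
      ((⊥ : SimpleGraph (Fin (k + 1))) ⊕g (⊤ : SimpleGraph (Fin 2)))
    rwa [Nat.card_fin] at this
  · have hpos : (0 : ℝ) < isoCount ((exampleGraph3 n k).delVerts S) := by
      exact_mod_cast (by omega : 0 < isoCount ((exampleGraph3 n k).delVerts S))
    rw [div_le_div_iff₀ (by positivity) hpos, mul_comm (S.ncard : ℝ)]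
    exact_mod_cast exampleGraph3_isoCount_mul_le hS
  · rw [div_lt_div_iff₀ (by positivity) (by positivity)]
    nlinarith

/-- For `n ≥ k+1`, the graph `G = K_{n+k+2} + ((k+1)K₁ ∪ K₂)` is
`(n+k+2)`-connected, its isolated toughness equals `(n+k+3)/(k+2)`, which is greater
than `(n+k+4)/(k+3)`, and `G` is not a `({K₂,C}, n)`-factor critical avoidable graph. -/
theorem statement13 (n k : ℕ) (hnk : k + 1 ≤ n) :
    IsMConnected (exampleGraph3 n k) (n + k + 2) ∧
    (∀ S : Set (Fin (n + k + 2) ⊕ (Fin (k + 1) ⊕ Fin 2)),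
      2 ≤ isoCount ((exampleGraph3 n k).delVerts S) →
      ((n : ℝ) + k + 3) / ((k : ℝ) + 2) ≤
        (S.ncard : ℝ) / (isoCount ((exampleGraph3 n k).delVerts S) : ℝ)) ∧
    (∃ S : Set (Fin (n + k + 2) ⊕ (Fin (k + 1) ⊕ Fin 2)),
      2 ≤ isoCount ((exampleGraph3 n k).delVerts S) ∧
      (S.ncard : ℝ) / (isoCount ((exampleGraph3 n k).delVerts S) : ℝ) =
        ((n : ℝ) + k + 3) / ((k : ℝ) + 2)) ∧
    ((n : ℝ) + k + 4) / ((k : ℝ) + 3) < ((n : ℝ) + k + 3) / ((k : ℝ) + 2) ∧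
    ¬ K2CycleFactorCriticalAvoidable (exampleGraph3 n k) n :=
  statement13_general n k
end

section
/- Let n and k be nonnegative integers with n ≥ k+1, and let G = K_{n+k+3} + ((k+2)K₃ ∪ K₂) be the join of the complete graph on n+k+3 vertices with the disjoint union of k+2 triangles K₃ and a single edge K₂. Then G is (n+k+3)-connected and its isolated toughness satisfies I(G) = (3(k+3)+n−1)/(k+3). -/
open SimpleGraph

variable {α β : Type*}

/-! Each vertex of the clique `K_{n+k+3}` is adjacent to every other vertex. So deleting fewer
than `n+k+3` vertices leaves one of them, through which the rest stays connected; and a set `S`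
whose deletion leaves two isolated vertices contains the whole clique. The isolated vertices then
form an independent set `J` of `(k+2)K₃ ∪ K₂`. As this graph is a disjoint union of cliques, the
neighbourhoods of the vertices of `J` are pairwise disjoint, and they lie in `S`: all have two
elements except at most one, so `|S| ≥ n+k+2+2|J|`, while `|J| ≤ k+3`. Hence
`|S|/|J| ≥ 2 + (n+k+2)/(k+3)`, with equality when `S` is the complement of a set made of one
vertex from each triangle and one end of the edge. -/

theorem Sum.exists_inl_notMem_of_ncard_lt [Fintype α] [Finite β] {S : Set (α ⊕ β)}
    (hS : S.ncard < Fintype.card α) : ∃ a, Sum.inl a ∉ S := by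
  rw [← Nat.card_eq_fintype_card, ← Set.ncard_range_of_injective Sum.inl_injective] at hS
  obtain ⟨_, ⟨a, rfl⟩, ha⟩ := Set.exists_mem_notMem_of_ncard_lt_ncard hS
  exact ⟨a, ha⟩

@[simp]
theorem trianglesGraph_adj {m : ℕ} {p q : Fin m × Fin 3} :
    (trianglesGraph m).Adj p q ↔ p.1 = q.1 ∧ p.2 ≠ q.2 := Iff.rfl

namespace SimpleGraph

section Isolated

variable {V : Type*} (G : SimpleGraph V)

def isolatedAfterDel (S : Set V) : Set V :=
  {v | v ∉ S ∧ ∀ w ∉ S, ¬ G.Adj v w}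

theorem isoCount_delVerts (S : Set V) :
    isoCount (G.delVerts S) = (G.isolatedAfterDel S).ncard := by
  rw [isoCount, ← Nat.card_coe_set_eq]
  exact Nat.card_congr
    { toFun := fun v => ⟨v.1.1, v.1.2, fun w hw hadj => v.2 ⟨w, hw⟩ hadj⟩
      invFun := fun v => ⟨⟨v.1, v.2.1⟩, fun w hadj => v.2.2 w.1 w.2 hadj⟩ }

variable {G}

theorem isolatedAfterDel_compl_of_isIndepSet {X : Set V} (hX : G.IsIndepSet X) :
    G.isolatedAfterDel Xᶜ = X := by
  ext v
  simp only [isolatedAfterDel, Set.mem_ofPred_eq, Set.notMem_compl_iff]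
  exact ⟨And.left, fun hv => ⟨hv, fun w hw hvw => hX hv hw (G.ne_of_adj hvw) hvw⟩⟩

theorem delVerts_connected_of_forall_adj {S : Set V} {u : V} (hu : u ∉ S)
    (hadj : ∀ v ≠ u, G.Adj u v) : (G.delVerts S).Connected := by
  refine (connected_iff_exists_forall_reachable _).mpr ⟨⟨u, hu⟩, fun v => ?_⟩
  by_cases hv : v.1 = u
  · exact (Subtype.ext hv : v = ⟨u, hu⟩) ▸ Reachable.refl _
  · exact Adj.reachable (hadj v.1 hv)

theorem mem_of_forall_adj_of_one_lt_ncard_isolatedAfterDel {S : Set V} {u : V}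
    (hadj : ∀ v ≠ u, G.Adj u v) (hS : 1 < (G.isolatedAfterDel S).ncard) : u ∈ S := by
  by_contra hu
  have hsub : G.isolatedAfterDel S ⊆ {u} := fun v hv => by
    by_contra hvu
    exact hv.2 u hu (hadj v hvu).symm
  have := Set.ncard_le_ncard hsub (Set.finite_singleton u)
  rw [Set.ncard_singleton] at this
  omega

end Isolated

namespace IsIndepSet

variable {V : Type*} [Fintype V] [DecidableEq V] {G : SimpleGraph V} [DecidableRel G.Adj]
  {J : Finset V}

theorem disjoint_biUnion_neighborFinset (hJ : G.IsIndepSet J) :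
    Disjoint J (J.biUnion fun v => G.neighborFinset v) := by
  rw [Finset.disjoint_biUnion_right]
  intro v hv
  rw [Finset.disjoint_left]
  intro u hu hvu
  rw [mem_neighborFinset] at hvu
  exact hJ hv hu (G.ne_of_adj hvu) hvu

theorem card_add_card_biUnion_neighborFinset_le (hJ : G.IsIndepSet J) :
    J.card + (J.biUnion fun v => G.neighborFinset v).card ≤ Fintype.card V := by
  rw [← Finset.card_union_of_disjoint hJ.disjoint_biUnion_neighborFinset]
  exact Finset.card_le_univ _

/-- The transitivity hypothesis says that `G` is a disjoint union of cliques. -/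
theorem card_biUnion_neighborFinset_eq_sum_degree (hJ : G.IsIndepSet J)
    (htrans : ∀ ⦃u v w⦄, G.Adj u v → G.Adj v w → u ≠ w → G.Adj u w) :
    (J.biUnion fun v => G.neighborFinset v).card = ∑ v ∈ J, G.degree v := by
  rw [Finset.card_biUnion]
  · simp only [card_neighborFinset_eq_degree]
  · intro u hu v hv huv
    rw [Function.onFun, Finset.disjoint_left]
    intro w hwu hwv
    rw [mem_neighborFinset] at hwu hwv
    exact hJ hu hv huv (htrans hwu hwv.symm huv)

end IsIndepSet

abbrev trianglesAndEdge (m : ℕ) : SimpleGraph ((Fin m × Fin 3) ⊕ Fin 2) :=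
  trianglesGraph m ⊕g ⊤

namespace trianglesAndEdge

variable {m : ℕ}

theorem adj_trans ⦃u v w : (Fin m × Fin 3) ⊕ Fin 2⦄ (huv : (trianglesAndEdge m).Adj u v)
    (hvw : (trianglesAndEdge m).Adj v w) (huw : u ≠ w) : (trianglesAndEdge m).Adj u w := by
  rcases u with ⟨t, i⟩ | a <;> rcases v with ⟨t', j⟩ | b <;> rcases w with ⟨t'', l⟩ | c <;>
    simp_all

variable [DecidableRel (trianglesAndEdge m).Adj]

theorem degree_inl (p : Fin m × Fin 3) : (trianglesAndEdge m).degree (.inl p) = 2 := by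
  rw [← card_neighborFinset_eq_degree, Finset.card_eq_two]
  refine ⟨.inl (p.1, p.2 + 1), .inl (p.1, p.2 + 2), by simp, ?_⟩
  ext (⟨t, j⟩ | b)
  · obtain ⟨s, i⟩ := p
    simp only [mem_neighborFinset, sum_adj_inl, trianglesGraph_adj, Finset.mem_insert,
      Finset.mem_singleton, Sum.inl.injEq, Prod.mk.injEq]
    fin_cases i <;> fin_cases j <;> simp [eq_comm]
  · simp

theorem degree_inr (a : Fin 2) : (trianglesAndEdge m).degree (.inr a) = 1 := by
  rw [← card_neighborFinset_eq_degree, Finset.card_eq_one]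
  refine ⟨.inr (a + 1), ?_⟩
  ext (p | b)
  · simp
  · simp only [mem_neighborFinset, sum_adj_inr, top_adj, Finset.mem_singleton, Sum.inr.injEq]
    fin_cases a <;> fin_cases b <;> simp

theorem two_mul_card_le_card_biUnion_neighborFinset_add_one
    {J : Finset ((Fin m × Fin 3) ⊕ Fin 2)} (hJ : (trianglesAndEdge m).IsIndepSet J) :
    2 * J.card ≤ (J.biUnion fun v => (trianglesAndEdge m).neighborFinset v).card + 1 := by
  rw [hJ.card_biUnion_neighborFinset_eq_sum_degree adj_trans]
  have hdeg (v : (Fin m × Fin 3) ⊕ Fin 2) :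
      2 ≤ (trianglesAndEdge m).degree v + if v.isRight then 1 else 0 := by
    rcases v with p | a <;> simp [degree_inl, degree_inr]
  have hright : (J.filter (·.isRight)).card ≤ 1 := by
    refine Finset.card_le_one.mpr fun x hx y hy => ?_
    rw [Finset.mem_filter] at hx hy
    rcases x with p | a
    · simp at hx
    rcases y with q | b
    · simp at hy
    by_contra hab
    exact hJ hx.1 hy.1 hab (by simpa using hab)
  calc 2 * J.card = ∑ v ∈ J, 2 := by rw [Finset.sum_const, smul_eq_mul, mul_comm]
    _ ≤ ∑ v ∈ J, ((trianglesAndEdge m).degree v + if v.isRight then 1 else 0) :=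
      Finset.sum_le_sum fun v _ => hdeg v
    _ = ∑ v ∈ J, (trianglesAndEdge m).degree v + (J.filter (·.isRight)).card := by
      rw [Finset.sum_add_distrib, Finset.card_filter]
    _ ≤ _ := by omega

def transversal (m : ℕ) : Finset ((Fin m × Fin 3) ⊕ Fin 2) :=
  (Finset.univ.map (Function.Embedding.sectL (Fin m) (0 : Fin 3))).disjSum {0}

theorem card_transversal (m : ℕ) : (transversal m).card = m + 1 := by
  simp [transversal, Finset.card_disjSum]

theorem isIndepSet_transversal (m : ℕ) :
    (trianglesAndEdge m).IsIndepSet (transversal m) := by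
  rintro (⟨s, i⟩ | a) hu (⟨t, j⟩ | b) hv huv <;>
    simp_all [transversal, Finset.mem_disjSum]

end trianglesAndEdge

section Join

variable {H : SimpleGraph β}

theorem top_join_adj_inl {a : α} {v : α ⊕ β} (h : v ≠ .inl a) :
    ((⊤ : SimpleGraph α).join H).Adj (.inl a) v := by
  rcases v with b | w
  · exact fun hab => h (congrArg Sum.inl hab).symm
  · trivial

theorem isIndepSet_image_inr {T : Set β} (hT : H.IsIndepSet T) :
    ((⊤ : SimpleGraph α).join H).IsIndepSet (Sum.inr '' T) := by
  rintro _ ⟨u, hu, rfl⟩ _ ⟨v, hv, rfl⟩ huv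
  exact hT hu hv (fun h => huv (congrArg Sum.inr h))

variable [Fintype α] [Fintype β] [DecidableEq β] [DecidableRel H.Adj]

theorem exists_isIndepSet_of_one_lt_ncard_isolatedAfterDel {S : Set (α ⊕ β)}
    (hS : 1 < (((⊤ : SimpleGraph α).join H).isolatedAfterDel S).ncard) :
    ∃ J : Finset β, H.IsIndepSet J ∧
      J.card = (((⊤ : SimpleGraph α).join H).isolatedAfterDel S).ncard ∧
      Fintype.card α + (J.biUnion fun v => H.neighborFinset v).card ≤ S.ncard := by
  classical
  set I := ((⊤ : SimpleGraph α).join H).isolatedAfterDel S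
  have hinl (a : α) : Sum.inl a ∈ S :=
    mem_of_forall_adj_of_one_lt_ncard_isolatedAfterDel (fun _ hv => top_join_adj_inl hv) hS
  set J := Finset.univ.filter fun w => Sum.inr w ∈ I
  have hJ {w : β} : w ∈ J ↔ Sum.inr w ∈ I := by simp [J]
  refine ⟨J, fun u hu v hv _ huv => (hJ.mp hu).2 (.inr v) (hJ.mp hv).1 huv, ?_, ?_⟩
  · have hI : I = Sum.inr '' (J : Set β) := by
      ext (a | w)
      · simp [(show Sum.inl a ∉ I from fun h => h.1 (hinl a))]
      · simp [hJ]
    rw [hI, Set.ncard_image_of_injective _ Sum.inr_injective, Set.ncard_coe_finset]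
  · have hsub :
        ↑((Finset.univ : Finset α).disjSum (J.biUnion fun v => H.neighborFinset v)) ⊆ S := by
      rintro (a | w) hw
      · exact hinl a
      · obtain ⟨u, hu, huw⟩ := Finset.mem_biUnion.mp (Finset.inr_mem_disjSum.mp hw)
        by_contra hwS
        exact (hJ.mp hu).2 (.inr w) hwS ((H.mem_neighborFinset u w).mp huw)
    simpa [Finset.card_disjSum] using Set.ncard_le_ncard hsub

end Join

end SimpleGraph

theorem exampleGraph2_eq_top_join (n k : ℕ) :
    exampleGraph2 n k = (⊤ : SimpleGraph (Fin (n + k + 3))).join (trianglesAndEdge (k + 2)) :=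
  rfl

theorem statement15_general (n k : ℕ) :
    IsMConnected (exampleGraph2 n k) (n + k + 3) ∧
    (∀ S : Set (Fin (n + k + 3) ⊕ ((Fin (k + 2) × Fin 3) ⊕ Fin 2)),
      2 ≤ isoCount ((exampleGraph2 n k).delVerts S) →
      (3 * ((k : ℝ) + 3) + (n : ℝ) - 1) / ((k : ℝ) + 3) ≤
        (S.ncard : ℝ) / (isoCount ((exampleGraph2 n k).delVerts S) : ℝ)) ∧
    (∃ S : Set (Fin (n + k + 3) ⊕ ((Fin (k + 2) × Fin 3) ⊕ Fin 2)),
      2 ≤ isoCount ((exampleGraph2 n k).delVerts S) ∧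
      (S.ncard : ℝ) / (isoCount ((exampleGraph2 n k).delVerts S) : ℝ) =
        (3 * ((k : ℝ) + 3) + (n : ℝ) - 1) / ((k : ℝ) + 3)) := by
  classical
  have hV : Nat.card (Fin (n + k + 3) ⊕ ((Fin (k + 2) × Fin 3) ⊕ Fin 2)) = n + 4 * k + 11 := by
    simp only [Nat.card_eq_fintype_card, Fintype.card_sum, Fintype.card_prod, Fintype.card_fin]
    ring
  simp only [exampleGraph2_eq_top_join, isoCount_delVerts]
  refine ⟨⟨by omega, fun S hS => ?_⟩, fun S hS => ?_, ?_⟩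
  · obtain ⟨a, ha⟩ := Sum.exists_inl_notMem_of_ncard_lt (S := S) (by simpa using hS)
    exact delVerts_connected_of_forall_adj ha fun _ hv => top_join_adj_inl hv
  · obtain ⟨J, hJ, hJcard, hSJ⟩ := exists_isIndepSet_of_one_lt_ncard_isolatedAfterDel hS
    have hN := trianglesAndEdge.two_mul_card_le_card_biUnion_neighborFinset_add_one hJ
    have hJN := hJ.card_add_card_biUnion_neighborFinset_le
    simp only [Fintype.card_sum, Fintype.card_prod, Fintype.card_fin] at hSJ hJN
    rw [← hJcard, div_le_div_iff₀ (by positivity) (by norm_cast; omega)]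
    have hJ3 : (J.card : ℝ) ≤ k + 3 := by norm_cast; omega
    have hS : (n : ℝ) + k + 2 + 2 * J.card ≤ S.ncard := by norm_cast; omega
    -- the slack is at least `(n + k + 2) * (k + 3 - |J|)`
    nlinarith
  · set X : Set (Fin (n + k + 3) ⊕ ((Fin (k + 2) × Fin 3) ⊕ Fin 2)) :=
      Sum.inr '' ↑(trianglesAndEdge.transversal (k + 2))
    have hX : X.ncard = k + 3 := by
      rw [Set.ncard_image_of_injective _ Sum.inr_injective, Set.ncard_coe_finset,
        trianglesAndEdge.card_transversal]
    have hXc := Set.ncard_add_ncard_compl X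
    refine ⟨Xᶜ, ?_⟩
    rw [isolatedAfterDel_compl_of_isIndepSet
      (isIndepSet_image_inr (trianglesAndEdge.isIndepSet_transversal _)), hX,
      show Xᶜ.ncard = n + 3 * k + 8 by omega]
    refine ⟨by omega, ?_⟩
    rw [div_eq_div_iff (by positivity) (by positivity)]
    push_cast
    ring

/-- For `n ≥ k+1`, the graph `G = K_{n+k+3} + ((k+2)K₃ ∪ K₂)` is
`(n+k+3)`-connected and its isolated toughness equals `(3(k+3)+n−1)/(k+3)`. -/
theorem statement15 (n k : ℕ) (hnk : k + 1 ≤ n) :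
    IsMConnected (exampleGraph2 n k) (n + k + 3) ∧
    (∀ S : Set (Fin (n + k + 3) ⊕ ((Fin (k + 2) × Fin 3) ⊕ Fin 2)),
      2 ≤ isoCount ((exampleGraph2 n k).delVerts S) →
      (3 * ((k : ℝ) + 3) + (n : ℝ) - 1) / ((k : ℝ) + 3) ≤
        (S.ncard : ℝ) / (isoCount ((exampleGraph2 n k).delVerts S) : ℝ)) ∧
    (∃ S : Set (Fin (n + k + 3) ⊕ ((Fin (k + 2) × Fin 3) ⊕ Fin 2)),
      2 ≤ isoCount ((exampleGraph2 n k).delVerts S) ∧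
      (S.ncard : ℝ) / (isoCount ((exampleGraph2 n k).delVerts S) : ℝ) =
        (3 * ((k : ℝ) + 3) + (n : ℝ) - 1) / ((k : ℝ) + 3)) :=
  statement15_general n k
end

section
/- Let n and k be nonnegative integers with n ≥ k+1, and let G = K_{n+k+2} + ((k+1)K₁ ∪ K₂) be the join of the complete graph on n+k+2 vertices with the disjoint union of k+1 isolated vertices and a single edge K₂. Then G is (n+k+2)-connected but not a ({K₂, odd cycles of length ≥ 5}, n)-factor critical avoidable graph. -/
open SimpleGraph

variable {α β : Type*}

/-! A `{K₂, C_{2i+1}}`-factor yields an injective map `f` with every vertex `x` adjacent to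
`f x` (step along the edge or around the cycle containing `x`), so in a graph with such a
factor `f` sends an independent set injectively into its complement. Deleting `n` vertices of
the clique and the edge of `K₂` from `K_{n+k+2} + ((k+1)K₁ ∪ K₂)` leaves the `k + 3` vertices of
`(k+1)K₁ ∪ K₂` independent, with only `k + 2` vertices outside them. Connectivity holds since
fewer than `n + k + 2` deletions spare a clique vertex, which is adjacent to all others. -/

namespace SimpleGraph

variable {V γ : Type*}

lemma connected_of_forall_adj {G : SimpleGraph V} (x : V) (hx : ∀ y, y ≠ x → G.Adj x y) :
    G.Connected := by
  refine (connected_iff_exists_forall_reachable G).2 ⟨x, fun y => ?_⟩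
  obtain rfl | hy := eq_or_ne y x
  · rfl
  · exact (hx y hy).reachable

lemma join_top_delVerts_connected [Finite α] [Finite β] (G₂ : SimpleGraph β)
    {S : Set (α ⊕ β)} (hS : S.ncard < Nat.card α) :
    (((⊤ : SimpleGraph α).join G₂).delVerts S).Connected := by
  obtain ⟨a, ha⟩ : ∃ a, Sum.inl a ∉ S := by
    by_contra! hall
    have := Set.ncard_le_ncard (Set.range_subset_iff.2 hall)
    rw [Set.ncard_range_of_injective Sum.inl_injective] at this
    omega
  refine connected_of_forall_adj ⟨Sum.inl a, ha⟩ fun ⟨y, hy⟩ hne => ?_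
  change ((⊤ : SimpleGraph α).join G₂).Adj (Sum.inl a) y
  rcases y with b | b
  · exact fun hab => hne (by simp [hab])
  · trivial

lemma exists_injOn_adj_of_iso {F : SimpleGraph V} {s : Set V} {B : SimpleGraph γ}
    (φ : F.induce s ≃g B) {σ : γ → γ} (hσ : σ.Injective) (hB : ∀ y, B.Adj y (σ y)) :
    ∃ g : V → V, Set.InjOn g s ∧ ∀ x ∈ s, F.Adj x (g x) := by
  classical
  let g (x : V) : V := if hx : x ∈ s then φ.symm (σ (φ ⟨x, hx⟩)) else x
  refine ⟨g, fun x hx y hy hxy => ?_, fun x hx => ?_⟩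
  · simp only [g, dif_pos hx, dif_pos hy] at hxy
    simpa using φ.injective (hσ (φ.symm.injective (Subtype.ext hxy)))
  · simpa [g, dif_pos hx] using φ.symm.map_adj_iff.2 (hB (φ ⟨x, hx⟩))

lemma exists_injective_adj_of_forall_connectedComponent {F : SimpleGraph V}
    (hF : ∀ c : F.ConnectedComponent,
      ∃ g : V → V, Set.InjOn g c.supp ∧ ∀ x ∈ c.supp, F.Adj x (g x)) :
    ∃ f : V → V, f.Injective ∧ ∀ x, F.Adj x (f x) := by
  choose g hinj hadj using hF
  refine ⟨fun x => g (F.connectedComponentMk x) x, fun x y hxy => ?_, fun x => hadj _ x rfl⟩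
  have hc : F.connectedComponentMk x = F.connectedComponentMk y := by
    rw [ConnectedComponent.eq.2 (hadj _ x rfl).reachable,
      ConnectedComponent.eq.2 (hadj _ y rfl).reachable]
    exact congrArg _ hxy
  simp only [hc] at hxy
  exact hinj _ (ConnectedComponent.mem_supp_iff _ _ |>.2 hc) rfl hxy

lemma HasK2OddCycleFactor.exists_injective_adj {G : SimpleGraph V} (h : HasK2OddCycleFactor G) :
    ∃ f : V → V, f.Injective ∧ ∀ x, G.Adj x (f x) := by
  obtain ⟨F, hFG, hF⟩ := h
  obtain ⟨f, hf, hadj⟩ := exists_injective_adj_of_forall_connectedComponent fun c => by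
    rcases hF c with hK₂ | ⟨m, hm, -, hC⟩
    · exact hK₂.elim fun φ => exists_injOn_adj_of_iso φ (add_left_injective 1) (by decide)
    · obtain ⟨m, rfl⟩ : ∃ m', m = m' + 2 := ⟨m - 2, by omega⟩
      exact hC.elim fun φ => exists_injOn_adj_of_iso φ (add_left_injective 1)
        fun y => cycleGraph_adj.2 (Or.inr (add_sub_cancel_left y 1))
  exact ⟨f, hf, fun x => hFG (hadj x)⟩

lemma IsIndepSet.ncard_le_ncard_compl [Finite V] {G : SimpleGraph V} {f : V → V}
    (hf : f.Injective) (hadj : ∀ x, G.Adj x (f x)) {I : Set V} (hI : G.IsIndepSet I) :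
    I.ncard ≤ Iᶜ.ncard :=
  Set.ncard_le_ncard_of_injOn f (fun x hx hfx => hI hx hfx (hadj x).ne (hadj x)) hf.injOn

end SimpleGraph

lemma exampleGraph3_adj_inr_inr_s17 {n k : ℕ} {a b : Fin (k + 1) ⊕ Fin 2}
    (h : (exampleGraph3 n k).Adj (Sum.inr a) (Sum.inr b)) :
    s((Sum.inr a : Fin (n + k + 2) ⊕ _), Sum.inr b) =
      s(Sum.inr (Sum.inr 0), Sum.inr (Sum.inr 1)) := by
  change ((⊥ : SimpleGraph (Fin (k + 1))) ⊕g (⊤ : SimpleGraph (Fin 2))).Adj a b at h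
  rcases a with a | a <;> rcases b with b | b
  all_goals simp at h
  fin_cases a <;> fin_cases b <;> first | rfl | exact Sym2.eq_swap | simp at h

lemma exampleGraph3_isMConnected (n k : ℕ) : IsMConnected (exampleGraph3 n k) (n + k + 2) := by
  refine ⟨?_, fun S hS => join_top_delVerts_connected _ (by simpa using hS)⟩
  simp only [Nat.card_eq_fintype_card, Fintype.card_sum, Fintype.card_fin]
  omega

lemma exampleGraph3_not_criticalAvoidable (n k : ℕ) :
    ¬ K2OddCycleFactorCriticalAvoidable (exampleGraph3 n k) n := by
  intro h
  set W := Set.range (Sum.inl ∘ Fin.castLE (by omega : n ≤ n + k + 2) :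
    Fin n → Fin (n + k + 2) ⊕ (Fin (k + 1) ⊕ Fin 2))
  have hW : W.ncard = n := by
    simp [W, Set.ncard_range_of_injective (Sum.inl_injective.comp (Fin.castLE_injective _))]
  have hWr : ∀ b, Sum.inr b ∉ W := by rintro b ⟨i, hi⟩; simp at hi
  obtain ⟨f, hf, hadj⟩ := (h W hW _ _ (hWr (Sum.inr 0)) (hWr (Sum.inr 1))
    (show (⊤ : SimpleGraph (Fin 2)).Adj 0 1 by simp)).exists_injective_adj
  let I : Set ↥Wᶜ := Subtype.val ⁻¹' Set.range Sum.inr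
  have hI : (((exampleGraph3 n k).deleteEdges
      {s(Sum.inr (Sum.inr 0), Sum.inr (Sum.inr 1))}).delVerts W).IsIndepSet I := by
    rintro ⟨_, _⟩ ⟨a, rfl⟩ ⟨_, _⟩ ⟨b, rfl⟩ - ⟨hab, hne⟩
    exact hne ⟨exampleGraph3_adj_inr_inr_s17 hab, hab.ne⟩
  have hIcard : I.ncard = k + 3 := by
    rw [Set.ncard_preimage_of_injective_subset_range Subtype.val_injective
      (by rintro _ ⟨b, rfl⟩; exact ⟨⟨_, hWr b⟩, rfl⟩),
      Set.ncard_range_of_injective Sum.inr_injective]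
    simp
  have hcard : Nat.card ↥Wᶜ = 2 * k + 5 := by
    rw [Nat.card_coe_set_eq, Set.ncard_compl, hW]
    simp; omega
  have hle := hI.ncard_le_ncard_compl hf hadj
  have hsum := Set.ncard_add_ncard_compl I
  omega

theorem statement17_general (n k : ℕ) :
    IsMConnected (exampleGraph3 n k) (n + k + 2) ∧
    ¬ K2OddCycleFactorCriticalAvoidable (exampleGraph3 n k) n :=
  ⟨exampleGraph3_isMConnected n k, exampleGraph3_not_criticalAvoidable n k⟩

/-- For `n ≥ k+1`, the graph `G = K_{n+k+2} + ((k+1)K₁ ∪ K₂)` is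
`(n+k+2)`-connected but not a `({K₂, C_{2i+1} | i ≥ 2}, n)`-factor critical avoidable
graph. -/
theorem statement17 (n k : ℕ) (hnk : k + 1 ≤ n) :
    IsMConnected (exampleGraph3 n k) (n + k + 2) ∧
    ¬ K2OddCycleFactorCriticalAvoidable (exampleGraph3 n k) n :=
  statement17_general n k
end
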